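/- Forced large drift (Proposition 1 of the paper): let P_0, ..., P_M (M ≥ 1) be probability distributions on a finite set X with each P_{t+1} positive on the support of P_t, let a ≠ b ∈ X, and suppose P_M(b) ≥ P_M(a) + β with β ≥ 0 and P_0(a) ≥ P_0(b) + (γ - 2δ). Set Δ = (1/2)·max(β + γ - 2δ, 0). Then TV(P_M, P_0) ≥ Δ and (1/M)·Σ_{t=0}^{M-1} KL(P_t‖P_{t+1}) ≥ 2·Δ²/M². -/

import Mathlib

/-!
Pinsker's inequality `2 · TV(P, Q)² ≤ KL(P‖Q)` is reduced, by the log-sum inequality on the set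
`{Q ≤ P}` and on its complement, to the two-point case, where the gap is monotone in the second
argument. Along the path `P₀, …, P_M` the endpoints differ by at least `Δ` in total variation
(compare the masses at `a` and `b`), so by the triangle inequality the step distances
`d_t = TV(P_{t+1}, P_t)` sum to at least `Δ`; Cauchy–Schwarz gives `Δ² ≤ M · ∑ d_t²` and Pinsker
bounds each `2 d_t²` by `KL(P_t‖P_{t+1})`.
-/

open Real Finset

section LogSum

variable {ι : Type*} {s : Finset ι} {a b : ι → ℝ}

lemma mul_log_div_eq_sub {p q : ℝ} (h : q = 0 → p = 0) :
    p * log (p / q) = p * log p - p * log q := by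
  rcases eq_or_ne p 0 with rfl | hp
  · simp
  · rw [log_div hp fun hq => hp (h hq)]
    ring

/-- The log-sum inequality. -/
theorem sum_mul_log_div_sum_le (ha : ∀ x ∈ s, 0 ≤ a x) (hb : ∀ x ∈ s, 0 ≤ b x)
    (hab : ∀ x ∈ s, b x = 0 → a x = 0) :
    (∑ x ∈ s, a x) * log ((∑ x ∈ s, a x) / ∑ x ∈ s, b x) ≤
      ∑ x ∈ s, a x * log (a x / b x) := by
  rcases (sum_nonneg hb).eq_or_lt with hB | hB
  · have ha0 : ∀ x ∈ s, a x = 0 := fun x hx =>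
      hab x hx ((sum_eq_zero_iff_of_nonneg hb).1 hB.symm x hx)
    rw [sum_eq_zero ha0, zero_mul]
    exact (sum_eq_zero fun x hx => by rw [ha0 x hx, zero_mul]).ge
  set A := ∑ x ∈ s, a x
  set B := ∑ x ∈ s, b x
  have hcancel : ∀ x ∈ s, b x * (a x / b x) = a x := fun x hx => mul_div_cancel_of_imp' (hab x hx)
  have hmean : ∑ x ∈ s, b x * (a x / b x) = A := sum_congr rfl hcancel
  have hmean_log : ∑ x ∈ s, b x * (a x / b x * log (a x / b x)) =
      ∑ x ∈ s, a x * log (a x / b x) :=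
    sum_congr rfl fun x hx => by rw [← mul_assoc, hcancel x hx]
  have jensen := convexOn_mul_log.map_centerMass_le hb hB
    fun x hx => Set.mem_Ici.2 (div_nonneg (ha x hx) (hb x hx))
  simp only [centerMass, Function.comp_def, smul_eq_mul, hmean, hmean_log, inv_mul_eq_div] at jensen
  calc A * log (A / B) = B * (A / B * log (A / B)) := by field_simp
    _ ≤ B * ((∑ x ∈ s, a x * log (a x / b x)) / B) := mul_le_mul_of_nonneg_left jensen hB.le
    _ = ∑ x ∈ s, a x * log (a x / b x) := by field_simp

end LogSum

section BinaryPinsker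

lemma hasDerivAt_binaryPinskerGap {p y : ℝ} (hy0 : y ≠ 0) (hy1 : y ≠ 1) :
    HasDerivAt (fun y => -p * log y - (1 - p) * log (1 - y) - 2 * (p - y) ^ 2)
      ((y - p) * (1 - 4 * (y * (1 - y))) / (y * (1 - y))) y := by
  have hy1' : 1 - y ≠ 0 := sub_ne_zero.2 hy1.symm
  have hlog := (hasDerivAt_log hy0).const_mul (-p)
  have hlog_compl :=
    ((hasDerivAt_log hy1').comp y ((hasDerivAt_id y).const_sub 1)).const_mul (1 - p)
  have hsq := (((hasDerivAt_id y).const_sub p).pow 2).const_mul 2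
  refine ((hlog.sub hlog_compl).sub hsq).congr_deriv ?_
  simp only [id]
  field_simp
  ring

lemma antitoneOn_binaryPinskerGap {p : ℝ} (hp : p ≤ 1) :
    AntitoneOn (fun y => -p * log y - (1 - p) * log (1 - y) - 2 * (p - y) ^ 2) (Set.Ioc 0 p) := by
  refine antitoneOn_of_hasDerivWithinAt_nonpos (convex_Ioc 0 p)
    (f' := fun y => (y - p) * (1 - 4 * (y * (1 - y))) / (y * (1 - y))) ?_ (fun y hy => ?_)
    fun y hy => ?_
  · have hlog_compl : ContinuousOn (fun y => (1 - p) * log (1 - y)) (Set.Ioc 0 p) := by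
      rcases hp.lt_or_eq with hp | rfl
      · exact continuousOn_const.mul <| continuousOn_log.comp (by fun_prop)
          fun y hy => sub_ne_zero.2 (hy.2.trans_lt hp).ne'
      · simpa using continuousOn_const
    exact ((continuousOn_const.mul <| continuousOn_log.mono fun y hy => hy.1.ne').sub
      hlog_compl).sub (by fun_prop)
  all_goals rw [interior_Ioc] at hy
  · exact (hasDerivAt_binaryPinskerGap hy.1.ne' (hy.2.trans_le hp).ne).hasDerivWithinAt
  · obtain ⟨hy0, hyp⟩ := hy
    have hy1 : 0 < 1 - y := by linarith
    refine div_nonpos_of_nonpos_of_nonneg ?_ (by positivity)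
    nlinarith [sq_nonneg (1 - 2 * y)]

theorem two_mul_sq_sub_le_binary_klDiv {p q : ℝ} (hq : 0 ≤ q) (hqp : q ≤ p) (hp : p ≤ 1)
    (hpq : q = 0 → p = 0) :
    2 * (p - q) ^ 2 ≤ p * log (p / q) + (1 - p) * log ((1 - p) / (1 - q)) := by
  rw [mul_log_div_eq_sub hpq, mul_log_div_eq_sub fun h => by linarith]
  rcases hq.eq_or_lt with rfl | hq
  · simp [hpq rfl]
  have hgap := antitoneOn_binaryPinskerGap hp ⟨hq, hqp⟩ ⟨hq.trans_le hqp, le_rfl⟩ hqp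
  simp only [sub_self] at hgap
  linarith

end BinaryPinsker

section Divergences

variable {X : Type*} [Fintype X]

noncomputable def tvDist (P Q : X → ℝ) : ℝ := (1 / 2) * ∑ x, |P x - Q x|

/-- Through `x / 0 = 0` and `log 0 = 0`, a point with `P x = 0` contributes `0` (the convention
`0 · log 0 = 0`), but so does one with `Q x = 0 < P x`, where the true divergence is `∞`. -/
noncomputable def klDiv (P Q : X → ℝ) : ℝ := ∑ x, P x * log (P x / Q x)

lemma tvDist_nonneg (P Q : X → ℝ) : 0 ≤ tvDist P Q := by
  unfold tvDist
  positivity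

lemma tvDist_comm (P Q : X → ℝ) : tvDist P Q = tvDist Q P := by
  simp only [tvDist, abs_sub_comm]

lemma sub_add_sub_le_two_mul_tvDist (P Q : X → ℝ) (a b : X) :
    (Q a - P a) + (P b - Q b) ≤ 2 * tvDist P Q := by
  classical
  rw [tvDist, ← mul_assoc, mul_one_div_cancel two_ne_zero, one_mul]
  rcases eq_or_ne a b with rfl | hab
  · simpa using sum_nonneg fun x _ => abs_nonneg (P x - Q x)
  calc (Q a - P a) + (P b - Q b) ≤ |P a - Q a| + |P b - Q b| :=
        add_le_add (abs_sub_comm (P a) _ ▸ le_abs_self _) (le_abs_self _)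
    _ = ∑ x ∈ {a, b}, |P x - Q x| := by rw [sum_pair hab]
    _ ≤ ∑ x, |P x - Q x| := sum_le_univ_sum_of_nonneg fun x => abs_nonneg _

lemma tvDist_le_sum_range_tvDist (P : ℕ → X → ℝ) (M : ℕ) :
    tvDist (P M) (P 0) ≤ ∑ t ∈ range M, tvDist (P (t + 1)) (P t) := by
  simp only [tvDist, ← mul_sum]
  gcongr
  rw [sum_comm]
  gcongr with x
  rw [← sum_range_sub (fun t => P t x)]
  exact abs_sum_le_sum_abs _ _

lemma tvDist_eq_sum_filter_sub {P Q : X → ℝ} (hPQ : ∑ x, P x = ∑ x, Q x) :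
    tvDist P Q = ∑ x with Q x ≤ P x, (P x - Q x) := by
  have hsplit : ∑ x with Q x ≤ P x, (P x - Q x) + ∑ x with ¬Q x ≤ P x, (P x - Q x) = 0 := by
    rw [sum_filter_add_sum_filter_not, sum_sub_distrib, hPQ, sub_self]
  have hpos : ∑ x with Q x ≤ P x, |P x - Q x| = ∑ x with Q x ≤ P x, (P x - Q x) :=
    sum_congr rfl fun x hx => abs_of_nonneg (sub_nonneg.2 (mem_filter.1 hx).2)
  have hneg : ∑ x with ¬Q x ≤ P x, |P x - Q x| = -∑ x with ¬Q x ≤ P x, (P x - Q x) := by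
    rw [← sum_neg_distrib]
    exact sum_congr rfl fun x hx => abs_of_neg (sub_neg.2 (not_le.1 (mem_filter.1 hx).2))
  rw [tvDist, ← sum_filter_add_sum_filter_not univ (fun x => Q x ≤ P x), hpos, hneg]
  linarith

theorem two_mul_sq_tvDist_le_klDiv {P Q : X → ℝ} (hP : ∀ x, 0 ≤ P x) (hQ : ∀ x, 0 ≤ Q x)
    (hP1 : ∑ x, P x = 1) (hQ1 : ∑ x, Q x = 1) (hPQ : ∀ x, Q x = 0 → P x = 0) :
    2 * tvDist P Q ^ 2 ≤ klDiv P Q := by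
  set p := ∑ x with Q x ≤ P x, P x
  set q := ∑ x with Q x ≤ P x, Q x
  have hPc : ∑ x with ¬Q x ≤ P x, P x = 1 - p := by
    rw [← hP1, ← sum_filter_add_sum_filter_not univ (fun x => Q x ≤ P x)]; ring
  have hQc : ∑ x with ¬Q x ≤ P x, Q x = 1 - q := by
    rw [← hQ1, ← sum_filter_add_sum_filter_not univ (fun x => Q x ≤ P x)]; ring
  have htv : tvDist P Q = p - q := by
    rw [tvDist_eq_sum_filter_sub (hP1.trans hQ1.symm), sum_sub_distrib]
  have hkl : p * log (p / q) + (1 - p) * log ((1 - p) / (1 - q)) ≤ klDiv P Q := by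
    rw [klDiv, ← sum_filter_add_sum_filter_not univ (fun x => Q x ≤ P x), ← hPc, ← hQc]
    exact add_le_add
      (sum_mul_log_div_sum_le (fun x _ => hP x) (fun x _ => hQ x) fun x _ => hPQ x)
      (sum_mul_log_div_sum_le (fun x _ => hP x) (fun x _ => hQ x) fun x _ => hPQ x)
  have hqp : q ≤ p := sum_le_sum fun x hx => (mem_filter.1 hx).2
  have hp1 : p ≤ 1 := by linarith [hPc ▸ sum_nonneg fun x (_ : x ∈ _) => hP x]
  have hpq : q = 0 → p = 0 := fun hq => sum_eq_zero fun x hx =>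
    hPQ x ((sum_eq_zero_iff_of_nonneg fun x _ => hQ x).1 hq x hx)
  rw [htv]
  exact (two_mul_sq_sub_le_binary_klDiv (sum_nonneg fun x _ => hQ x) hqp hp1 hpq).trans hkl

end Divergences

lemma two_mul_sq_div_sq_le_mean_of_le_sum {d k : ℕ → ℝ} {Δ : ℝ} {M : ℕ} (hΔ : 0 ≤ Δ)
    (hd : Δ ≤ ∑ t ∈ range M, d t) (hdk : ∀ t < M, 2 * d t ^ 2 ≤ k t) :
    2 * Δ ^ 2 / M ^ 2 ≤ (1 / M) * ∑ t ∈ range M, k t := by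
  rcases M.eq_zero_or_pos with rfl | hM
  · simp
  have hcs : Δ ^ 2 ≤ M * ∑ t ∈ range M, d t ^ 2 := calc
    Δ ^ 2 ≤ (∑ t ∈ range M, d t) ^ 2 := pow_le_pow_left₀ hΔ hd 2
    _ ≤ M * ∑ t ∈ range M, d t ^ 2 := by
      simpa using sq_sum_le_card_mul_sum_sq (s := range M) (f := d)
  have hk : 2 * ∑ t ∈ range M, d t ^ 2 ≤ ∑ t ∈ range M, k t := by
    rw [mul_sum]
    exact sum_le_sum fun t ht => hdk t (mem_range.1 ht)
  have hM' : (0 : ℝ) < M := by exact_mod_cast hM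
  rw [div_le_iff₀ (by positivity)]
  field_simp
  nlinarith

theorem forced_large_drift_general {X : Type*} [Fintype X] (M : ℕ)
    (P : ℕ → X → ℝ)
    (hP : ∀ t ≤ M, ∀ x, 0 ≤ P t x) (hPsum : ∀ t ≤ M, ∑ x, P t x = 1)
    (habs : ∀ t < M, ∀ x, 0 < P t x → 0 < P (t + 1) x)
    (a b : X) (β γ δ : ℝ)
    (h1 : P M a + β ≤ P M b) (h2 : P 0 b + (γ - 2 * δ) ≤ P 0 a) :
    (1 / 2) * max (β + γ - 2 * δ) 0 ≤ (1 / 2) * ∑ x, |P M x - P 0 x| ∧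
    2 * ((1 / 2) * max (β + γ - 2 * δ) 0) ^ 2 / (M : ℝ) ^ 2 ≤
      (1 / (M : ℝ)) * ∑ t ∈ Finset.range M,
        ∑ x, P t x * Real.log (P t x / P (t + 1) x) := by
  have hdrift : (1 / 2) * max (β + γ - 2 * δ) 0 ≤ tvDist (P M) (P 0) := by
    have hmass := sub_add_sub_le_two_mul_tvDist (P M) (P 0) a b
    have hmax : max (β + γ - 2 * δ) 0 ≤ 2 * tvDist (P M) (P 0) :=
      max_le (by linarith) (by linarith [tvDist_nonneg (P M) (P 0)])
    linarith
  refine ⟨hdrift, two_mul_sq_div_sq_le_mean_of_le_sum (by positivity)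
    (hdrift.trans (tvDist_le_sum_range_tvDist P M)) fun t ht => ?_⟩
  rw [tvDist_comm]
  refine two_mul_sq_tvDist_le_klDiv (hP t ht.le) (hP (t + 1) ht) (hPsum t ht.le) (hPsum (t + 1) ht)
    fun x hx => ?_
  by_contra h
  exact (habs t ht x ((hP t ht.le x).lt_of_ne' h)).ne' hx

/-- Forced large drift (Proposition 1): if `P_M b ≥ P_M a + β` with `β ≥ 0`,
`P_0 a ≥ P_0 b + (γ - 2δ)`, `a ≠ b`, each `P_{t+1}` positive on the support of
`P_t`, and `Δ = (1/2)·max (β + γ - 2δ) 0`, then `TV(P_M, P_0) ≥ Δ` and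
`(1/M)·Σ_{t<M} KL(P_t‖P_{t+1}) ≥ 2·Δ²/M²`. -/
theorem forced_large_drift {X : Type*} [Fintype X] (M : ℕ) (hM : 1 ≤ M)
    (P : ℕ → X → ℝ)
    (hP : ∀ t ≤ M, ∀ x, 0 ≤ P t x) (hPsum : ∀ t ≤ M, ∑ x, P t x = 1)
    (habs : ∀ t < M, ∀ x, 0 < P t x → 0 < P (t + 1) x)
    (a b : X) (hab : a ≠ b) (β γ δ : ℝ) (hβ : 0 ≤ β)
    (h1 : P M a + β ≤ P M b) (h2 : P 0 b + (γ - 2 * δ) ≤ P 0 a) :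
    (1 / 2) * max (β + γ - 2 * δ) 0 ≤ (1 / 2) * ∑ x, |P M x - P 0 x| ∧
    2 * ((1 / 2) * max (β + γ - 2 * δ) 0) ^ 2 / (M : ℝ) ^ 2 ≤
      (1 / (M : ℝ)) * ∑ t ∈ Finset.range M,
        ∑ x, P t x * Real.log (P t x / P (t + 1) x) :=
  forced_large_drift_general M P hP hPsum habs a b β γ δ h1 h2
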